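/- Let q>1 be real, β,μ>0, and let Q(X),R(X) be complex polynomials with deg(R) ≥ deg(Q) and R(im) ≠ 0 for all m ∈ ℝ. Let b:ℝ→ℂ be continuous with |b(m)| ≤ 1/|R(im)| for all m ∈ ℝ, and assume μ > deg(Q)+1. Then there exists a constant C₂>0 (depending only on Q, R, μ) such that for all f,g ∈ E_{(β,μ)}, the function m ↦ b(m)∫_{-∞}^{+∞} f(m−m₁) Q(im₁) g(m₁) dm₁ belongs to E_{(β,μ)} and ‖ b(m)∫_{-∞}^{+∞} f(m−m₁)Q(im₁)g(m₁)dm₁ ‖_{(β,μ)} ≤ C₂ ‖f‖_{(β,μ)} ‖g‖_{(β,μ)}. -/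

import Mathlib

/-!
Write `d = deg Q`. Factoring over `ℂ` gives `|Q(it)| ≲ (1+|t|)^d`, and since `R` has no root on
`iℝ`, also `|R(im)| ≳ (1+|m|)^(deg R) ≥ (1+|m|)^d`, so `|b(m)| ≲ (1+|m|)^(-d)`. The exponential
weights are absorbed by `|m| ≤ |m-t| + |t|`; for the polynomial ones, `1+|m| ≤ 2 max(1+|m-t|, 1+|t|)`
gives `(1+|m|)^(μ-d) (1+|m-t|)^(-μ) (1+|t|)^(d-μ) ≤ 2^(μ-d) ((1+|m-t|)^(-μ) + (1+|t|)^(d-μ))`,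
whose integral in `t` is finite and independent of `m` because `μ > d + 1`. Continuity is that of
the convolution of the bounded continuous `f` with the integrable `t ↦ Q(it) g(t)`.
-/

noncomputable section

open Complex MeasureTheory Set

namespace Paper

/-- The weight `(1+|m|)^μ e^{β|m|}` in the Fourier variable `m`. -/
def mWeight (β μ m : ℝ) : ℝ := (1 + |m|) ^ μ * Real.exp (β * |m|)

/-- The set of weighted values of `h`, whose supremum is the `E_{(β,μ)}`-norm. -/
def EnormSet (β μ : ℝ) (h : ℝ → ℂ) : Set ℝ :=
  {x | ∃ m : ℝ, x = mWeight β μ m * ‖(h m)‖}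

/-- The norm of the Banach space `E_{(β,μ)}`. -/
def Enorm (β μ : ℝ) (h : ℝ → ℂ) : ℝ := sSup (EnormSet β μ h)

/-- Membership in the Banach space `E_{(β,μ)}`. -/
def MemE (β μ : ℝ) (h : ℝ → ℂ) : Prop := Continuous h ∧ BddAbove (EnormSet β μ h)

/-- Open unbounded sector with vertex `0`, bisecting direction `d` and (half-)opening `op`. -/
def uSector (d op : ℝ) : Set ℂ :=
  {z | ∃ t θ : ℝ, 0 < t ∧ |θ - d| < op ∧ z = (t : ℂ) * Complex.exp (Complex.I * (θ : ℂ))}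

/-- Bounded open sector with vertex `0`, direction `d`, opening `op` and radius `r`. -/
def bSector (d op r : ℝ) : Set ℂ :=
  {z | ∃ t θ : ℝ, 0 < t ∧ t < r ∧ |θ - d| < op ∧ z = (t : ℂ) * Complex.exp (Complex.I * (θ : ℂ))}

/-- `q^x` (real power) viewed as a complex number. -/
def qc (q x : ℝ) : ℂ := ((q ^ x : ℝ) : ℂ)

/-- The weight `exp(-(k/2) log²|τ+δ|/log q - α log|τ+δ|)` (first family). -/
def tauWeight1 (q k α δ : ℝ) (τ : ℂ) : ℝ :=
  Real.exp (-(k / 2) * (Real.log (‖(τ + (δ : ℂ))‖)) ^ 2 / Real.log q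
    - α * Real.log (‖(τ + (δ : ℂ))‖))

/-- The weight `exp(-(k/2) log²|τ|/log q - ν log|τ|)` (second family). -/
def tauWeight2 (q k ν : ℝ) (τ : ℂ) : ℝ :=
  Real.exp (-(k / 2) * (Real.log (‖τ‖)) ^ 2 / Real.log q - ν * Real.log (‖τ‖))

/-- Weighted values of a function of `(τ,m)` over `Ω × ℝ`. -/
def ExpSet (β μ : ℝ) (w : ℂ → ℝ) (Ω : Set ℂ) (h : ℂ → ℝ → ℂ) : Set ℝ :=
  {x | ∃ τ ∈ Ω, ∃ m : ℝ, x = mWeight β μ m * w τ * ‖(h τ m)‖}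

/-- Norm of the weighted Banach spaces `Exp^q_{(…)}`. -/
def ExpNorm (β μ : ℝ) (w : ℂ → ℝ) (Ω : Set ℂ) (h : ℂ → ℝ → ℂ) : ℝ := sSup (ExpSet β μ w Ω h)

/-- Membership in the weighted Banach spaces `Exp^q_{(…)}`: continuity on `Ω × ℝ`,
holomorphy in `τ` on the open part `Ωo`, and finiteness of the weighted sup. -/
def MemExp (β μ : ℝ) (w : ℂ → ℝ) (Ω Ωo : Set ℂ) (h : ℂ → ℝ → ℂ) : Prop :=
  ContinuousOn (fun p : ℂ × ℝ => h p.1 p.2) (Ω ×ˢ (univ : Set ℝ)) ∧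
  (∀ m : ℝ, DifferentiableOn ℂ (fun τ => h τ m) Ωo) ∧
  BddAbove (ExpSet β μ w Ω h)

/-- The convolution `f ⋆^P g (m) = ∫ f(m-m₁) P(im₁) g(m₁) dm₁`. -/
def starQ (P : Polynomial ℂ) (f g : ℝ → ℂ) (m : ℝ) : ℂ :=
  ∫ m₁ : ℝ, f (m - m₁) * P.eval (Complex.I * (m₁ : ℂ)) * g m₁

/-- The `q`-convolution of order `k`:
`φ_k ⋆^P_{q;1/k} f = Σ_{h=0}^{p₁} τ^h/(q^{1/k})^{h(h-1)/2} ( c_h ⋆^P σ_{q,τ}^{-h/k} f )`. -/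
def qConv (q k : ℝ) (p₁ : ℕ) (P : Polynomial ℂ) (c : ℕ → ℝ → ℂ) (f : ℂ → ℝ → ℂ)
    (τ : ℂ) (m : ℝ) : ℂ :=
  ∑ h ∈ Finset.range (p₁ + 1),
    (τ ^ h / qc q (((h : ℝ) * ((h : ℝ) - 1)) / (2 * k))) *
      starQ P (c h) (fun m₁ => f (τ / qc q ((h : ℝ) / k)) m₁) m

/-- The Jacobi theta function `Θ_{q^{1/k}}(x) = Σ_{n ∈ ℤ} q^{-n(n-1)/(2k)} x^n`. -/
def theta (q k : ℝ) (x : ℂ) : ℂ :=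
  ∑' n : ℤ, qc q (-(((n : ℝ) * ((n : ℝ) - 1)) / (2 * k))) * x ^ n

/-- The constant `π_{q^{1/k}} = (log q / k) Π_{n≥0} (1 - q^{-(n+1)/k})⁻¹`. -/
def piq (q k : ℝ) : ℝ := (Real.log q / k) * ∏' n : ℕ, (1 - q ^ (-(((n : ℝ) + 1) / k)))⁻¹

/-- The point `t e^{i d}` of the half-line `L_d`. -/
def ray (d t : ℝ) : ℂ := (t : ℂ) * Complex.exp (Complex.I * (d : ℂ))

/-- The `q`-Laplace transform of order `k` along direction `d`:
`L^d_{q;1/k}(f)(T) = (1/π_{q^{1/k}}) ∫_{L_d} f(u)/Θ_{q^{1/k}}(u/T) du/u`. -/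
def qLaplace {E : Type*} [NormedAddCommGroup E] [NormedSpace ℂ E]
    (q k d : ℝ) (f : ℂ → E) (T : ℂ) : E :=
  ∫ t in Set.Ioi (0 : ℝ), (((piq q k : ℂ) * theta q k (ray d t / T) * (t : ℂ))⁻¹) • f (ray d t)

/-- The domain `R_{d,δ̃} = {T ≠ 0 : |1 + re^{id}/T| > δ̃ for all r ≥ 0}`. -/
def Rset (d δt : ℝ) : Set ℂ :=
  {T | T ≠ 0 ∧ ∀ r : ℝ, 0 ≤ r → δt < ‖(1 + ray d r / T)‖}

/-- The inverse Fourier transform `F⁻¹(g)(z) = (2π)^{-1/2} ∫ g(m) e^{izm} dm`. -/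
def invFourier (g : ℝ → ℂ) (z : ℂ) : ℂ :=
  (Real.sqrt (2 * Real.pi))⁻¹ * ∫ m : ℝ, g m * Complex.exp (Complex.I * z * (m : ℂ))

/-- The differential operator `P(∂_z)` applied to a function of `z`. -/
def Pdz (P : Polynomial ℂ) (f : ℂ → ℂ) (z : ℂ) : ℂ :=
  ∑ i ∈ Finset.range (P.natDegree + 1), P.coeff i * iteratedDeriv i f z

/-- The horizontal strip `H_b = {z : |Im z| < b}`. -/
def Hstrip (b : ℝ) : Set ℂ := {z | |z.im| < b}

/-- Good covering `(ℰ_p)_{0 ≤ p ≤ ς-1}` of the punctured neighbourhood of the origin. -/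
def IsGoodCovering (ς : ℕ) (ε₀ : ℝ) (E : ℕ → Set ℂ) : Prop :=
  2 ≤ ς ∧ 0 < ε₀ ∧
  (∀ p < ς, ∃ d op : ℝ, 0 < op ∧ E p = bSector d op ε₀) ∧
  (∀ j < ς, ∀ k < ς, (E j ∩ E k).Nonempty ↔ (j = k ∨ (j + 1) % ς = k ∨ (k + 1) % ς = j)) ∧
  (∃ U : Set ℂ, U ∈ nhds (0 : ℂ) ∧ (⋃ p ∈ Finset.range ς, E p) = U \ {0})

/-- `f : V → F` admits `Σ c_n ε^n` as `q`-Gevrey asymptotic expansion of order `1/k` on `V`. -/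
def HasQExp {F : Type*} [NormedAddCommGroup F] [NormedSpace ℂ F]
    (q k : ℝ) (V : Set ℂ) (f : ℂ → F) (c : ℕ → F) : Prop :=
  ∀ d op r : ℝ, 0 < op → 0 < r → closure (bSector d op r) \ {0} ⊆ V →
    ∃ A C : ℝ, 0 < A ∧ 0 < C ∧ ∀ ε ∈ bSector d op r, ∀ N : ℕ,
      ‖f ε - ∑ n ∈ Finset.range (N + 1), ε ^ n • c n‖
        ≤ C * A ^ (N + 1) * q ^ (((N : ℝ) * ((N : ℝ) + 1)) / (2 * k)) * ‖ε‖ ^ (N + 1)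

/-- `q`-Gevrey asymptotic expansion of order `1/k`, for functions with values in the Banach
space `𝔽` of bounded holomorphic functions on `T × H` (sup-norm expressed pointwise). -/
def HasQExpPt (q k : ℝ) (V T H : Set ℂ)
    (f : ℂ → ℂ → ℂ → ℂ) (c : ℕ → ℂ → ℂ → ℂ) : Prop :=
  ∀ d op r : ℝ, 0 < op → 0 < r → closure (bSector d op r) \ {0} ⊆ V →
    ∃ A C : ℝ, 0 < A ∧ 0 < C ∧ ∀ ε ∈ bSector d op r, ∀ N : ℕ, ∀ t ∈ T, ∀ z ∈ H,
      ‖(f t z ε - ∑ n ∈ Finset.range (N + 1), c n t z * ε ^ n)‖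
        ≤ C * A ^ (N + 1) * q ^ (((N : ℝ) * ((N : ℝ) + 1)) / (2 * k)) * ‖ε‖ ^ (N + 1)

/-- The roots `q_ℓ(m)` of the polynomial `P_{m,1}`. -/
def qroot1 (q : ℝ) (k₁ dD1 : ℕ) (Qp RD1 : Polynomial ℂ) (ℓ : ℕ) (m : ℝ) : ℂ :=
  Complex.exp (2 * (Real.pi : ℂ) * Complex.I * (ℓ : ℂ) / (dD1 : ℂ)) *
    (Qp.eval (Complex.I * (m : ℂ)) / RD1.eval (Complex.I * (m : ℂ))) ^ ((1 : ℂ) / (dD1 : ℂ)) *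
    qc q (((dD1 : ℝ) + 2 * (k₁ : ℝ) - 1) / (2 * (k₁ : ℝ)))

/-- Membership in the unbounded sector `{z : |z| ≥ r, |arg z - dd| ≤ νν}`. -/
def inSectorGE (dd νν r : ℝ) (z : ℂ) : Prop :=
  r ≤ ‖z‖ ∧
    ∃ θ : ℝ, |θ - dd| ≤ νν ∧ z = ((‖z‖ : ℝ) : ℂ) * Complex.exp (Complex.I * (θ : ℂ))

/-- The main `q`-difference-differential equation, at the point `(t,z,ε)`. -/
def mainEq (q : ℝ) (k₁ k₂ : ℕ) (dD1 dD2 D : ℕ) (d δ' Δ : ℕ → ℕ)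
    (Qp RD1 RD2 : Polynomial ℂ) (Rl : ℕ → Polynomial ℂ)
    (c : ℕ → ℂ → ℂ → ℂ → ℂ) (f : ℂ → ℂ → ℂ → ℂ) (u : ℂ → ℂ → ℂ → ℂ)
    (t z ε : ℂ) : Prop :=
  Pdz Qp (fun z' => u ((q : ℂ) * t) z' ε) z
    = (ε * t) ^ dD1 * Pdz RD1 (fun z' => u (qc q ((dD1 : ℝ) / (k₁ : ℝ) + 1) * t) z' ε) z
    + (ε * t) ^ dD2 * Pdz RD2 (fun z' => u (qc q ((dD2 : ℝ) / (k₂ : ℝ) + 1) * t) z' ε) z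
    + ∑ ℓ ∈ Finset.Icc 1 (D - 1),
        ε ^ (Δ ℓ) * t ^ (d ℓ) *
          (c ℓ (qc q (δ' ℓ) * t) z ε * Pdz (Rl ℓ) (fun z' => u (qc q (δ' ℓ) * t) z' ε) z)
    + f ((q : ℂ) * t) z ε

/-- The first auxiliary equation in the `q`-Borel plane of order `k₁` (equation (23)). -/
def borelEq1 (q : ℝ) (k₁ k₂ : ℕ) (D p₁ : ℕ) (dD1 dD2 : ℕ) (d δ' Δ : ℕ → ℕ)
    (Qp RD1 RD2 : Polynomial ℂ) (Rl : ℕ → Polynomial ℂ)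
    (C : ℕ → ℕ → ℝ → ℂ) (Ψ : ℂ → ℝ → ℂ) (ε : ℂ)
    (w : ℂ → ℝ → ℂ) (τ : ℂ) (m : ℝ) : Prop :=
  Qp.eval (Complex.I * (m : ℂ)) *
      (τ ^ k₁ / qc q (((k₁ : ℝ) * ((k₁ : ℝ) - 1)) / (2 * (k₁ : ℝ)))) * w τ m
    = RD1.eval (Complex.I * (m : ℂ)) *
        (τ ^ (dD1 + k₁) /
          qc q ((((dD1 : ℝ) + (k₁ : ℝ)) * ((dD1 : ℝ) + (k₁ : ℝ) - 1)) / (2 * (k₁ : ℝ)))) * w τ m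
    + RD2.eval (Complex.I * (m : ℂ)) *
        (τ ^ (dD2 + k₁) /
          qc q ((((dD2 : ℝ) + (k₁ : ℝ)) * ((dD2 : ℝ) + (k₁ : ℝ) - 1)) / (2 * (k₁ : ℝ)))) *
        w (qc q ((dD2 : ℝ) * (1 / (k₂ : ℝ) - 1 / (k₁ : ℝ))) * τ) m
    + (τ ^ k₁ / qc q (((k₁ : ℝ) * ((k₁ : ℝ) - 1)) / (2 * (k₁ : ℝ)))) * Ψ τ m
    + ∑ ℓ ∈ Finset.Icc 1 (D - 1),
        ε ^ (Δ ℓ - d ℓ) *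
          (τ ^ (d ℓ + k₁) /
            qc q ((((d ℓ : ℝ) + (k₁ : ℝ)) * ((d ℓ : ℝ) + (k₁ : ℝ) - 1)) / (2 * (k₁ : ℝ)))) *
          (((Real.sqrt (2 * Real.pi) : ℝ) : ℂ)⁻¹ *
            qConv q (k₁ : ℝ) p₁ (Rl ℓ) (C ℓ)
              w (qc q ((δ' ℓ : ℝ) - (d ℓ : ℝ) / (k₁ : ℝ) - 1) * τ) m)

/-- The second auxiliary equation in the `q`-Borel plane of order `k₂` (equation (33)). -/
def borelEq2 (q : ℝ) (k₁ k₂ : ℕ) (D p₁ : ℕ) (dD1 dD2 : ℕ) (d δ' Δ : ℕ → ℕ)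
    (Qp RD1 RD2 : Polynomial ℂ) (Rl : ℕ → Polynomial ℂ)
    (C : ℕ → ℕ → ℝ → ℂ) (Ψ₂ : ℂ → ℝ → ℂ) (ε : ℂ)
    (w : ℂ → ℝ → ℂ) (τ : ℂ) (m : ℝ) : Prop :=
  Qp.eval (Complex.I * (m : ℂ)) *
      (τ ^ k₂ / qc q (((k₂ : ℝ) * ((k₂ : ℝ) - 1)) / (2 * (k₂ : ℝ)))) * w τ m
    = RD1.eval (Complex.I * (m : ℂ)) *
        (τ ^ (dD1 + k₂) /
          qc q ((((dD1 : ℝ) + (k₂ : ℝ)) * ((dD1 : ℝ) + (k₂ : ℝ) - 1)) / (2 * (k₂ : ℝ)))) *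
        w (qc q ((dD1 : ℝ) * (1 / (k₁ : ℝ) - 1 / (k₂ : ℝ))) * τ) m
    + RD2.eval (Complex.I * (m : ℂ)) *
        (τ ^ (dD2 + k₂) /
          qc q ((((dD2 : ℝ) + (k₂ : ℝ)) * ((dD2 : ℝ) + (k₂ : ℝ) - 1)) / (2 * (k₂ : ℝ)))) * w τ m
    + (τ ^ k₂ / qc q (((k₂ : ℝ) * ((k₂ : ℝ) - 1)) / (2 * (k₂ : ℝ)))) * Ψ₂ τ m
    + ∑ ℓ ∈ Finset.Icc 1 (D - 1),
        ε ^ (Δ ℓ - d ℓ) *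
          (τ ^ (d ℓ + k₂) /
            qc q ((((d ℓ : ℝ) + (k₂ : ℝ)) * ((d ℓ : ℝ) + (k₂ : ℝ) - 1)) / (2 * (k₂ : ℝ)))) *
          (((Real.sqrt (2 * Real.pi) : ℝ) : ℂ)⁻¹ *
            qConv q (k₂ : ℝ) p₁ (Rl ℓ) (C ℓ)
              w (qc q ((δ' ℓ : ℝ) - (d ℓ : ℝ) / (k₂ : ℝ) - 1) * τ) m)


section PolynomialBounds

open Polynomial

variable {K : Type*} [NormedField K] [IsAlgClosed K]

theorem norm_eval_eq_norm_leadingCoeff_mul_prod_roots (p : K[X]) (z : K) :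
    ‖p.eval z‖ = ‖p.leadingCoeff‖ * (p.roots.map fun a => ‖z - a‖).prod := by
  conv_lhs =>
    rw [← C_leadingCoeff_mul_prod_multiset_X_sub_C (IsAlgClosed.card_roots_eq_natDegree (p := p))]
  rw [eval_mul, eval_C, eval_multiset_prod, norm_mul, Multiset.map_map]
  congr 1
  exact (map_multiset_prod (normHom (α := K)) _).trans (by simp [Multiset.map_map])

theorem exists_norm_eval_le_mul_one_add_norm_pow (p : K[X]) :
    ∃ C, ∀ z : K, ‖p.eval z‖ ≤ C * (1 + ‖z‖) ^ p.natDegree := by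
  refine ⟨‖p.leadingCoeff‖ * (p.roots.map fun a => 1 + ‖a‖).prod, fun z => ?_⟩
  calc ‖p.eval z‖ = ‖p.leadingCoeff‖ * (p.roots.map fun a => ‖z - a‖).prod :=
        norm_eval_eq_norm_leadingCoeff_mul_prod_roots p z
    _ ≤ ‖p.leadingCoeff‖ * (p.roots.map fun a => (1 + ‖a‖) * (1 + ‖z‖)).prod := by
        gcongr
        refine Multiset.prod_map_le_prod_map₀ _ _ (fun _ _ => norm_nonneg _) fun a _ => ?_
        nlinarith [norm_sub_le z a, norm_nonneg z, norm_nonneg a]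
    _ = ‖p.leadingCoeff‖ * (p.roots.map fun a => 1 + ‖a‖).prod * (1 + ‖z‖) ^ p.natDegree := by
        rw [Multiset.prod_map_mul, Multiset.map_const', Multiset.prod_replicate,
          IsAlgClosed.card_roots_eq_natDegree, mul_assoc]

end PolynomialBounds

theorem one_add_abs_le_mul_norm_I_mul_sub {a : ℂ} (ha : a.re ≠ 0) (m : ℝ) :
    1 + |m| ≤ ((1 + ‖a‖) / |a.re| + 1) * ‖I * m - a‖ := by
  have hre : |a.re| ≤ ‖I * m - a‖ := by simpa using abs_re_le_norm (I * m - a)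
  have hm : |m| ≤ ‖I * m - a‖ + ‖a‖ := by simpa using norm_le_norm_sub_add (I * m) a
  have ha' : 1 + ‖a‖ ≤ (1 + ‖a‖) / |a.re| * ‖I * m - a‖ := by
    rw [div_mul_eq_mul_div, le_div_iff₀ (abs_pos.mpr ha)]
    gcongr
  linarith

/-- No root of `R` lies on the imaginary axis, so each linear factor of `R(im)` is bounded
below by a multiple of `1 + |m|`. -/
theorem exists_one_add_abs_pow_natDegree_le_mul_norm_eval {R : Polynomial ℂ}
    (hR : ∀ m : ℝ, R.eval (I * m) ≠ 0) :
    ∃ c, ∀ m : ℝ, (1 + |m|) ^ R.natDegree ≤ c * ‖R.eval (I * m)‖ := by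
  have hR0 : R ≠ 0 := by
    rintro rfl
    exact hR 0 Polynomial.eval_zero
  have hroots : ∀ a ∈ R.roots, a.re ≠ 0 := by
    intro a ha hre
    apply hR a.im
    have : I * a.im = a := Complex.ext (by simp [hre]) (by simp)
    rw [this]
    exact (Polynomial.mem_roots hR0).1 ha
  refine ⟨(R.roots.map fun a => (1 + ‖a‖) / |a.re| + 1).prod / ‖R.leadingCoeff‖, fun m => ?_⟩
  calc (1 + |m|) ^ R.natDegree = (R.roots.map fun _ => 1 + |m|).prod := by
        rw [Multiset.map_const', Multiset.prod_replicate, IsAlgClosed.card_roots_eq_natDegree]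
    _ ≤ (R.roots.map fun a => ((1 + ‖a‖) / |a.re| + 1) * ‖I * m - a‖).prod :=
        Multiset.prod_map_le_prod_map₀ _ _ (fun _ _ => by positivity)
          fun a ha => one_add_abs_le_mul_norm_I_mul_sub (hroots a ha) m
    _ = _ := by
        rw [Multiset.prod_map_mul, norm_eval_eq_norm_leadingCoeff_mul_prod_roots]
        field_simp [Polynomial.leadingCoeff_ne_zero.mpr hR0]

section Weight

variable {β μ : ℝ}

theorem mWeight_pos (β μ m : ℝ) : 0 < mWeight β μ m := by
  unfold mWeight
  positivity

theorem one_le_mWeight (hβ : 0 ≤ β) (hμ : 0 ≤ μ) (m : ℝ) : 1 ≤ mWeight β μ m :=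
  one_le_mul_of_one_le_of_one_le (Real.one_le_rpow (by linarith [abs_nonneg m]) hμ)
    (Real.one_le_exp (by positivity))

theorem mWeight_mul_norm_le_Enorm {h : ℝ → ℂ} (hh : BddAbove (EnormSet β μ h)) (m : ℝ) :
    mWeight β μ m * ‖h m‖ ≤ Enorm β μ h :=
  le_csSup hh ⟨m, rfl⟩

theorem Enorm_nonneg (h : ℝ → ℂ) : 0 ≤ Enorm β μ h :=
  Real.sSup_nonneg fun _ ⟨m, hx⟩ => hx ▸ mul_nonneg (mWeight_pos β μ m).le (norm_nonneg _)

theorem Enorm_le_of_forall_le {h : ℝ → ℂ} {C : ℝ} (hC : ∀ m, mWeight β μ m * ‖h m‖ ≤ C) :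
    Enorm β μ h ≤ C :=
  csSup_le ⟨_, 0, rfl⟩ fun _ ⟨m, hx⟩ => hx ▸ hC m

theorem bddAbove_EnormSet_of_forall_le {h : ℝ → ℂ} {C : ℝ}
    (hC : ∀ m, mWeight β μ m * ‖h m‖ ≤ C) : BddAbove (EnormSet β μ h) :=
  ⟨C, fun _ ⟨m, hx⟩ => hx ▸ hC m⟩

theorem norm_le_mul_one_add_abs_rpow_neg (hβ : 0 ≤ β) {h : ℝ → ℂ} {C : ℝ}
    (hC : ∀ m, mWeight β μ m * ‖h m‖ ≤ C) (m : ℝ) : ‖h m‖ ≤ C * (1 + |m|) ^ (-μ) := by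
  have hpos : 0 < (1 + |m|) ^ μ := by positivity
  rw [Real.rpow_neg (by positivity), ← div_eq_mul_inv, le_div_iff₀ hpos, mul_comm]
  refine le_trans ?_ (hC m)
  unfold mWeight
  gcongr
  exact le_mul_of_one_le_right hpos.le (Real.one_le_exp (by positivity))

end Weight

/-- Since `a ≤ 2 max U V`, the factor `a ^ s` is absorbed by whichever of `U`, `V` is larger. -/
theorem rpow_mul_rpow_le_two_rpow_mul_add {a U V s d : ℝ} (ha : 0 ≤ a) (hU : 1 ≤ U) (hV : 0 < V)
    (haUV : a ≤ U + V) (hs : 0 ≤ s) (hd : 0 ≤ d) :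
    a ^ s * V ^ d ≤ 2 ^ s * (V ^ (s + d) + U ^ (s + d) * V ^ d) := by
  rcases le_total U V with hUV | hVU
  · calc a ^ s * V ^ d ≤ (2 * V) ^ s * V ^ d := by gcongr; linarith
      _ = 2 ^ s * V ^ (s + d) := by rw [Real.mul_rpow zero_le_two hV.le, Real.rpow_add hV]; ring
      _ ≤ 2 ^ s * (V ^ (s + d) + U ^ (s + d) * V ^ d) := by
        gcongr
        exact le_add_of_nonneg_right (by positivity)
  · calc a ^ s * V ^ d ≤ (2 * U) ^ s * V ^ d := by gcongr; linarith
      _ = 2 ^ s * U ^ s * V ^ d := by rw [Real.mul_rpow zero_le_two (by linarith)]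
      _ ≤ 2 ^ s * U ^ (s + d) * V ^ d := by
        gcongr
        exact le_add_of_nonneg_right hd
      _ ≤ 2 ^ s * (V ^ (s + d) + U ^ (s + d) * V ^ d) := by
        rw [mul_assoc]
        gcongr
        exact le_add_of_nonneg_left (by positivity)

theorem mWeight_mul_le {β μ d : ℝ} (hβ : 0 ≤ β) (hd : 0 ≤ d) (hdμ : d ≤ μ) (m t : ℝ) :
    mWeight β μ m * (1 + |t|) ^ d ≤
      2 ^ (μ - d) * (1 + |m|) ^ d * mWeight β μ (m - t) * mWeight β μ t *
        ((1 + |m - t|) ^ (-μ) + (1 + |t|) ^ (d - μ)) := by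
  have hA : 0 < 1 + |m| := by positivity
  have hU : 0 < 1 + |m - t| := by positivity
  have hV : 0 < 1 + |t| := by positivity
  have hsplit : (1 + |m|) ^ μ = (1 + |m|) ^ d * (1 + |m|) ^ (μ - d) := by
    rw [← Real.rpow_add hA, add_sub_cancel]
  have hUU : (1 + |m - t|) ^ μ * (1 + |m - t|) ^ (-μ) = 1 := by
    rw [← Real.rpow_add hU, add_neg_cancel, Real.rpow_zero]
  have hVV : (1 + |t|) ^ μ * (1 + |t|) ^ (d - μ) = (1 + |t|) ^ d := by
    rw [← Real.rpow_add hV, add_sub_cancel]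
  have htri : |m| ≤ |m - t| + |t| := by simpa using abs_add_le (m - t) t
  have hexp : Real.exp (β * |m|) ≤ Real.exp (β * |m - t|) * Real.exp (β * |t|) := by
    rw [← Real.exp_add, ← mul_add]
    gcongr
  have hpeak := rpow_mul_rpow_le_two_rpow_mul_add (U := 1 + |m - t|) hA.le
    (by linarith [abs_nonneg (m - t)]) hV (by linarith) (sub_nonneg.2 hdμ) hd
  rw [sub_add_cancel] at hpeak
  calc mWeight β μ m * (1 + |t|) ^ d
      = (1 + |m|) ^ d * Real.exp (β * |m|) * ((1 + |m|) ^ (μ - d) * (1 + |t|) ^ d) := by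
        rw [mWeight, hsplit]; ring
    _ ≤ (1 + |m|) ^ d * (Real.exp (β * |m - t|) * Real.exp (β * |t|)) *
          (2 ^ (μ - d) * ((1 + |t|) ^ μ + (1 + |m - t|) ^ μ * (1 + |t|) ^ d)) := by
        gcongr
    _ = _ := by
        simp only [mWeight]
        linear_combination (-2 ^ (μ - d) * (1 + |m|) ^ d * Real.exp (β * |m - t|) *
            Real.exp (β * |t|)) * ((1 + |t|) ^ μ * hUU + (1 + |m - t|) ^ μ * hVV)

theorem integrable_one_add_abs_rpow_neg {r : ℝ} (hr : 1 < r) :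
    Integrable fun t : ℝ => (1 + |t|) ^ (-r) := by
  have : (Module.finrank ℝ ℝ : ℝ) < r := by rwa [Module.finrank_self, Nat.cast_one]
  simpa [Real.norm_eq_abs] using integrable_one_add_norm (μ := (volume : Measure ℝ)) this

theorem starQ_eq_convolution (P : Polynomial ℂ) (f g : ℝ → ℂ) :
    starQ P f g =
      convolution (fun t : ℝ => P.eval (I * t) * g t) f (ContinuousLinearMap.mul ℂ ℂ) volume := by
  ext m
  rw [convolution_mul, starQ]
  congr 1
  ext t
  ring

theorem continuous_starQ {P : Polynomial ℂ} {f g : ℝ → ℂ} (hf : Continuous f)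
    (hfb : BddAbove (range fun s => ‖f s‖)) (hPg : Integrable fun t : ℝ => P.eval (I * t) * g t) :
    Continuous (starQ P f g) := by
  rw [starQ_eq_convolution]
  exact hfb.continuous_convolution_right_of_integrable _ hPg hf

section Convolution

variable {β μ d : ℝ} {P : Polynomial ℂ} {f g : ℝ → ℂ} {CP Ng : ℝ}

theorem integrable_eval_I_mul_mul (hβ : 0 ≤ β) (hdμ : 1 < μ - d) (hg : Continuous g)
    (hP : ∀ t : ℝ, ‖P.eval (I * t)‖ ≤ CP * (1 + |t|) ^ d)
    (hgN : ∀ s, mWeight β μ s * ‖g s‖ ≤ Ng) :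
    Integrable fun t : ℝ => P.eval (I * t) * g t := by
  have hint : Integrable fun t : ℝ => CP * Ng * (1 + |t|) ^ (d - μ) := by
    simpa using (integrable_one_add_abs_rpow_neg hdμ).const_mul (CP * Ng)
  refine hint.mono' ((P.continuous.comp (by fun_prop)).mul hg).aestronglyMeasurable
    (ae_of_all _ fun t => ?_)
  have hCP : 0 ≤ CP * (1 + |t|) ^ d := (norm_nonneg _).trans (hP t)
  calc ‖P.eval (I * t) * g t‖ ≤ CP * (1 + |t|) ^ d * (Ng * (1 + |t|) ^ (-μ)) := by
        rw [norm_mul]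
        gcongr
        exacts [hP t, norm_le_mul_one_add_abs_rpow_neg hβ hgN t]
    _ = CP * Ng * (1 + |t|) ^ (d - μ) := by
        rw [sub_eq_add_neg, Real.rpow_add (by positivity)]
        ring

theorem mWeight_mul_norm_mul_starQ_le (hβ : 0 ≤ β) (hd : 0 ≤ d) (hdμ : d + 1 < μ)
    {b : ℝ → ℂ} {cb Nf : ℝ} (hb : ∀ m, ‖b m‖ * (1 + |m|) ^ d ≤ cb)
    (hP : ∀ t : ℝ, ‖P.eval (I * t)‖ ≤ CP * (1 + |t|) ^ d)
    (hfN : ∀ s, mWeight β μ s * ‖f s‖ ≤ Nf) (hgN : ∀ s, mWeight β μ s * ‖g s‖ ≤ Ng) (m : ℝ) :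
    mWeight β μ m * ‖b m * starQ P f g m‖ ≤
      2 ^ (μ - d) * cb * CP * Nf * Ng *
        ((∫ t : ℝ, (1 + |t|) ^ (-μ)) + ∫ t : ℝ, (1 + |t|) ^ (d - μ)) := by
  set k : ℝ → ℝ := fun t => (1 + |m - t|) ^ (-μ) + (1 + |t|) ^ (d - μ)
  have hk₁ : Integrable fun t : ℝ => (1 + |m - t|) ^ (-μ) :=
    (integrable_one_add_abs_rpow_neg (by linarith)).comp_sub_left m
  have hk₂ : Integrable fun t : ℝ => (1 + |t|) ^ (d - μ) := by
    simpa using integrable_one_add_abs_rpow_neg (r := μ - d) (by linarith)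
  have hcb : 0 ≤ cb := (by positivity : 0 ≤ ‖b 0‖ * (1 + |(0 : ℝ)|) ^ d).trans (hb 0)
  have hCP : 0 ≤ CP := by simpa using (norm_nonneg _).trans (hP 0)
  have hNf : 0 ≤ Nf := (mul_nonneg (mWeight_pos β μ 0).le (norm_nonneg _)).trans (hfN 0)
  have hNg : 0 ≤ Ng := (mul_nonneg (mWeight_pos β μ 0).le (norm_nonneg _)).trans (hgN 0)
  have hwb : 0 ≤ mWeight β μ m * ‖b m‖ := mul_nonneg (mWeight_pos β μ m).le (norm_nonneg _)
  have hpoint : ∀ t, mWeight β μ m * ‖b m‖ * ‖f (m - t) * P.eval (I * t) * g t‖ ≤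
      2 ^ (μ - d) * cb * CP * Nf * Ng * k t := fun t => by
    calc mWeight β μ m * ‖b m‖ * ‖f (m - t) * P.eval (I * t) * g t‖
        ≤ mWeight β μ m * ‖b m‖ * (‖f (m - t)‖ * (CP * (1 + |t|) ^ d) * ‖g t‖) := by
          rw [norm_mul, norm_mul]
          gcongr
          exact hP t
      _ = CP * ‖b m‖ * ‖f (m - t)‖ * ‖g t‖ * (mWeight β μ m * (1 + |t|) ^ d) := by ring
      _ ≤ CP * ‖b m‖ * ‖f (m - t)‖ * ‖g t‖ * (2 ^ (μ - d) * (1 + |m|) ^ d *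
            mWeight β μ (m - t) * mWeight β μ t * k t) :=
          mul_le_mul_of_nonneg_left (mWeight_mul_le hβ hd (by linarith) m t) (by positivity)
      _ = 2 ^ (μ - d) * CP * (‖b m‖ * (1 + |m|) ^ d) * (mWeight β μ (m - t) * ‖f (m - t)‖) *
            (mWeight β μ t * ‖g t‖) * k t := by ring
      _ ≤ 2 ^ (μ - d) * CP * cb * Nf * Ng * k t := by
          have hf0 := mul_nonneg (mWeight_pos β μ (m - t)).le (norm_nonneg (f (m - t)))
          have hg0 := mul_nonneg (mWeight_pos β μ t).le (norm_nonneg (g t))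
          gcongr
          exacts [hb m, hfN (m - t), hgN t]
      _ = 2 ^ (μ - d) * cb * CP * Nf * Ng * k t := by ring
  calc mWeight β μ m * ‖b m * starQ P f g m‖
      = mWeight β μ m * ‖b m‖ * ‖∫ t, f (m - t) * P.eval (I * t) * g t‖ := by
        rw [norm_mul, starQ, mul_assoc]
    _ ≤ mWeight β μ m * ‖b m‖ * ∫ t, ‖f (m - t) * P.eval (I * t) * g t‖ := by
        gcongr
        exact norm_integral_le_integral_norm _
    _ = ∫ t, mWeight β μ m * ‖b m‖ * ‖f (m - t) * P.eval (I * t) * g t‖ :=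
        (integral_const_mul _ _).symm
    _ ≤ ∫ t, 2 ^ (μ - d) * cb * CP * Nf * Ng * k t :=
        integral_mono_of_nonneg (ae_of_all _ fun t => by positivity) ((hk₁.add hk₂).const_mul _)
          (ae_of_all _ hpoint)
    _ = _ := by
        rw [integral_const_mul, integral_add hk₁ hk₂,
          integral_sub_left_eq_self (fun t : ℝ => (1 + |t|) ^ (-μ))]

end Convolution

theorem memE_mul_starQ_and_Enorm_le {β μ d CP cb : ℝ} {P : Polynomial ℂ} {b f g : ℝ → ℂ}
    (hβ : 0 ≤ β) (hd : 0 ≤ d) (hdμ : d + 1 < μ)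
    (hP : ∀ t : ℝ, ‖P.eval (I * t)‖ ≤ CP * (1 + |t|) ^ d)
    (hbc : Continuous b) (hb : ∀ m, ‖b m‖ * (1 + |m|) ^ d ≤ cb)
    (hf : MemE β μ f) (hg : MemE β μ g) :
    MemE β μ (fun m => b m * starQ P f g m) ∧
      Enorm β μ (fun m => b m * starQ P f g m) ≤
        2 ^ (μ - d) * cb * CP * ((∫ t : ℝ, (1 + |t|) ^ (-μ)) + ∫ t : ℝ, (1 + |t|) ^ (d - μ)) *
          Enorm β μ f * Enorm β μ g := by
  have hfN := mWeight_mul_norm_le_Enorm hf.2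
  have hgN := mWeight_mul_norm_le_Enorm hg.2
  have hbound : ∀ m, mWeight β μ m * ‖b m * starQ P f g m‖ ≤
      2 ^ (μ - d) * cb * CP * ((∫ t : ℝ, (1 + |t|) ^ (-μ)) + ∫ t : ℝ, (1 + |t|) ^ (d - μ)) *
        Enorm β μ f * Enorm β μ g := fun m =>
    (mWeight_mul_norm_mul_starQ_le hβ hd hdμ hb hP hfN hgN m).trans_eq (by ring)
  have hfb : BddAbove (range fun s => ‖f s‖) := by
    refine ⟨Enorm β μ f, ?_⟩
    rintro _ ⟨s, rfl⟩
    exact (le_mul_of_one_le_left (norm_nonneg _) (one_le_mWeight hβ (by linarith) s)).trans (hfN s)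
  have hPg := integrable_eval_I_mul_mul hβ (by linarith) hg.1 hP hgN
  exact ⟨⟨hbc.mul (continuous_starQ hf.1 hfb hPg), bddAbove_EnormSet_of_forall_le hbound⟩,
    Enorm_le_of_forall_le hbound⟩

theorem statement0_general
    (β μ : ℝ) (hβ : 0 < β)
    (Q R : Polynomial ℂ)
    (hdeg : Q.natDegree ≤ R.natDegree)
    (hR : ∀ m : ℝ, R.eval (Complex.I * (m : ℂ)) ≠ 0)
    (hμQ : (Q.natDegree : ℝ) + 1 < μ) :
    ∃ C₂ : ℝ, 0 < C₂ ∧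
      ∀ b : ℝ → ℂ, Continuous b →
        (∀ m : ℝ, ‖(b m)‖ ≤ 1 / ‖(R.eval (Complex.I * (m : ℂ)))‖) →
        ∀ f g : ℝ → ℂ, MemE β μ f → MemE β μ g →
          MemE β μ (fun m => b m * starQ Q f g m) ∧
          Enorm β μ (fun m => b m * starQ Q f g m) ≤ C₂ * Enorm β μ f * Enorm β μ g := by
  obtain ⟨CQ, hCQ⟩ := exists_norm_eval_le_mul_one_add_norm_pow Q
  obtain ⟨cR, hcR⟩ := exists_one_add_abs_pow_natDegree_le_mul_norm_eval hR
  have hQ : ∀ t : ℝ, ‖Q.eval (I * t)‖ ≤ CQ * (1 + |t|) ^ (Q.natDegree : ℝ) := fun t => by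
    simpa [Real.rpow_natCast] using hCQ (I * t)
  have hb : ∀ b : ℝ → ℂ, (∀ m : ℝ, ‖b m‖ ≤ 1 / ‖R.eval (I * m)‖) →
      ∀ m, ‖b m‖ * (1 + |m|) ^ (Q.natDegree : ℝ) ≤ cR := fun b hbR m => by
    rw [Real.rpow_natCast]
    calc ‖b m‖ * (1 + |m|) ^ Q.natDegree ≤ 1 / ‖R.eval (I * m)‖ * (cR * ‖R.eval (I * m)‖) := by
          gcongr
          exacts [hbR m, (pow_le_pow_right₀ (le_add_of_nonneg_right (abs_nonneg m)) hdeg).trans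
            (hcR m)]
      _ = cR := by field_simp [hR m]
  refine ⟨max (2 ^ (μ - Q.natDegree) * cR * CQ * ((∫ t : ℝ, (1 + |t|) ^ (-μ)) +
    ∫ t : ℝ, (1 + |t|) ^ ((Q.natDegree : ℝ) - μ))) 1, by positivity,
    fun b hbc hbR f g hf hg => ?_⟩
  obtain ⟨hmem, hle⟩ :=
    memE_mul_starQ_and_Enorm_le hβ.le (Nat.cast_nonneg _) hμQ hQ hbc (hb b hbR) hf hg
  refine ⟨hmem, hle.trans ?_⟩
  have hf0 := Enorm_nonneg (β := β) (μ := μ) f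
  have hg0 := Enorm_nonneg (β := β) (μ := μ) g
  gcongr
  exact le_max_left _ _

/-- continuity of the convolution product `⋆^{b,Q}` on `E_{(β,μ)}`. -/
theorem statement0
    (q β μ : ℝ) (hq : 1 < q) (hβ : 0 < β) (hμ : 0 < μ)
    (Q R : Polynomial ℂ)
    (hdeg : Q.natDegree ≤ R.natDegree)
    (hR : ∀ m : ℝ, R.eval (Complex.I * (m : ℂ)) ≠ 0)
    (hμQ : (Q.natDegree : ℝ) + 1 < μ) :
    ∃ C₂ : ℝ, 0 < C₂ ∧
      ∀ b : ℝ → ℂ, Continuous b →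
        (∀ m : ℝ, ‖(b m)‖ ≤ 1 / ‖(R.eval (Complex.I * (m : ℂ)))‖) →
        ∀ f g : ℝ → ℂ, MemE β μ f → MemE β μ g →
          MemE β μ (fun m => b m * starQ Q f g m) ∧
          Enorm β μ (fun m => b m * starQ Q f g m) ≤ C₂ * Enorm β μ f * Enorm β μ g :=
  statement0_general β μ hβ Q R hdeg hR hμQ

end Paper
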